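/- arXiv:2310.11505 — 3 statements merged into one kernel-verified Lean document; each statement's English description precedes it below -/
import Mathlib

section
/- The real Lie subalgebra of the 2^n × 2^n complex matrices generated (under the matrix commutator) by the set {i Z_j : 1 ≤ j ≤ n} ∪ {i X_j X_{j+1} : 1 ≤ j ≤ n−1} equals the real linear span of {c_μ c_ν : 1 ≤ μ < ν ≤ 2n}, and this Lie algebra has real dimension n(2n−1). -/
open Matrix Complex
open scoped Kronecker

attribute [local instance 100] LieRing.ofAssociativeRing

noncomputable section

abbrev QIdx (n : ℕ) := Fin n → Fin 2
abbrev NMat (n : ℕ) := Matrix (QIdx n) (QIdx n) ℂ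
abbrev NMat2 (n : ℕ) := Matrix (QIdx n × QIdx n) (QIdx n × QIdx n) ℂ

/-- The 2×2 Pauli X matrix. -/
def σX : Matrix (Fin 2) (Fin 2) ℂ := !![0, 1; 1, 0]
/-- The 2×2 Pauli Y matrix. -/
def σY : Matrix (Fin 2) (Fin 2) ℂ := !![0, -Complex.I; Complex.I, 0]
/-- The 2×2 Pauli Z matrix. -/
def σZ : Matrix (Fin 2) (Fin 2) ℂ := !![1, 0; 0, -1]

/-- Tensor (Kronecker) product of `n` one-qubit matrices, realized on index type `Fin n → Fin 2`. -/
def tensor {n : ℕ} (M : Fin n → Matrix (Fin 2) (Fin 2) ℂ) : NMat n :=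
  Matrix.of fun f g => ∏ i, M i (f i) (g i)

/-- The Jordan–Wigner Majorana operator `c_μ` (0-based index: `c_{2i} = Z^{⊗i} X I…`,
`c_{2i+1} = Z^{⊗i} Y I…`). -/
def majorana (n : ℕ) (μ : Fin (2 * n)) : NMat n :=
  tensor fun j =>
    if (j : ℕ) < (μ : ℕ) / 2 then σZ
    else if (j : ℕ) = (μ : ℕ) / 2 then (if (μ : ℕ) % 2 = 0 then σX else σY)
    else 1

/-- Ordered product `c^s` of the Majorana operators indexed by a subset `s`. -/
def cProd (n : ℕ) (s : Finset (Fin (2 * n))) : NMat n :=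
  ((s.sort (· ≤ ·)).map (majorana n)).prod

/-- The module `B_κ`: the complex span of products of `κ` distinct Majoranas. -/
def Bspace (n κ : ℕ) : Submodule ℂ (NMat n) :=
  Submodule.span ℂ {M | ∃ s : Finset (Fin (2 * n)), s.card = κ ∧ M = cProd n s}

/-- The Pauli string with `Z` on qubit `j` and identity elsewhere. -/
def pauliZ (n : ℕ) (j : Fin n) : NMat n := tensor fun k => if k = j then σZ else 1

/-- The Pauli string with `X` on qubits `j` and `j+1` and identity elsewhere. -/
def pauliXX (n : ℕ) (j : Fin n) : NMat n :=
  tensor fun k => if (k : ℕ) = (j : ℕ) ∨ (k : ℕ) = (j : ℕ) + 1 then σX else 1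

/-- The parity operator `P = Z^{⊗n}`. -/
def parity (n : ℕ) : NMat n := tensor fun _ => σZ


/-- The generators `{i Z_j} ∪ {i X_j X_{j+1}}` of the matchgate dynamical Lie algebra. -/
def genSet (n : ℕ) : Set (NMat n) :=
  {M | ∃ j : Fin n, M = Complex.I • pauliZ n j} ∪
  {M | ∃ j : Fin n, (j : ℕ) + 1 < n ∧ M = Complex.I • pauliXX n j}


/-!
The Jordan–Wigner Majoranas satisfy the Clifford relations `c_μ² = 1`, `c_ν c_μ = -c_μ c_ν`
(`μ ≠ ν`), and the generators are products of consecutive Majoranas: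
`i Z_j = c_{2j} c_{2j+1}` and `i X_j X_{j+1} = c_{2j+1} c_{2j+2}`. The Clifford relations give
`⁅c_a c_b, c_b c_d⁆ = c_a c_d - c_d c_a`. Hence the span of the quadratic monomials `c_μ c_ν` is
closed under commutators, and, by induction on `ν - μ`, every `c_μ c_ν` is generated by the
consecutive ones. The quadratic monomials are orthogonal for the trace form: a product of
Majoranas in which some index occurs exactly once anticommutes with that Majorana, so it is
traceless. They are therefore linearly independent, and there are `(2n).choose 2 = n(2n-1)`
of them.
-/

section Clifford

variable {ι R : Type*} [Ring R]

structure IsCliffordFamily (c : ι → R) : Prop where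
  mul_self : ∀ μ, c μ * c μ = 1
  anticomm : ∀ {μ ν}, μ ≠ ν → c ν * c μ = -(c μ * c ν)

namespace IsCliffordFamily

variable {c : ι → R} {a b d p q : ι}

lemma commute_mul (hc : IsCliffordFamily c) (hpa : p ≠ a) (hpb : p ≠ b) :
    Commute (c p) (c a * c b) := by
  calc c p * (c a * c b) = -(c a * c p * c b) := by
        rw [← mul_assoc, hc.anticomm hpa.symm]; noncomm_ring
    _ = c a * c b * c p := by rw [mul_assoc (c a), hc.anticomm hpb.symm]; noncomm_ring

lemma commute_mul_mul (hc : IsCliffordFamily c) (hap : a ≠ p) (haq : a ≠ q) (hbp : b ≠ p)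
    (hbq : b ≠ q) : Commute (c a * c b) (c p * c q) :=
  (hc.commute_mul hap haq).mul_left (hc.commute_mul hbp hbq)

lemma mul_mul_mul_anticomm (hc : IsCliffordFamily c) (hpa : p ≠ a) (hpb : p ≠ b)
    (hpd : p ≠ d) : c a * c b * c d * c p = -(c p * (c a * c b * c d)) := by
  rw [mul_assoc _ (c d), hc.anticomm hpd, mul_neg, ← mul_assoc, ← (hc.commute_mul hpa hpb).eq,
    mul_assoc, mul_assoc]

lemma mul_mul_self (hc : IsCliffordFamily c) (hab : a ≠ b) : c a * c b * (c a * c b) = -1 := by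
  calc c a * c b * (c a * c b) = c a * (c b * c a) * c b := by noncomm_ring
    _ = -(c a * c a * (c b * c b)) := by rw [hc.anticomm hab]; noncomm_ring
    _ = -1 := by rw [hc.mul_self, hc.mul_self, one_mul]

lemma lie_mul_mul_chain (hc : IsCliffordFamily c) (hab : a ≠ b) (hbd : b ≠ d) :
    ⁅c a * c b, c b * c d⁆ = c a * c d - c d * c a := by
  have hleft : c a * c b * (c b * c d) = c a * c d := by
    rw [mul_assoc, ← mul_assoc (c b), hc.mul_self, one_mul]
  have hright : c b * c d * (c a * c b) = c d * c a := by
    rw [mul_assoc, ← mul_assoc (c d), ← mul_assoc, (hc.commute_mul hbd hab.symm).eq, mul_assoc,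
      hc.mul_self, mul_one]
  rw [Ring.lie_def, hleft, hright]

end IsCliffordFamily

end Clifford

section QuadraticSpan

variable {ι R : Type*} [LinearOrder ι] [Ring R] (K : Type*) [CommRing K] [Algebra K R]

def quadSpan (c : ι → R) : Submodule K R :=
  Submodule.span K {x | ∃ μ ν, μ < ν ∧ x = c μ * c ν}

variable {K} {c : ι → R} {a b p q : ι}

namespace IsCliffordFamily

lemma mul_mem_quadSpan (hc : IsCliffordFamily c) (hab : a ≠ b) : c a * c b ∈ quadSpan K c := by
  rcases hab.lt_or_gt with hab | hba
  · exact Submodule.subset_span ⟨a, b, hab, rfl⟩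
  · rw [hc.anticomm hba.ne]
    exact Submodule.neg_mem _ (Submodule.subset_span ⟨b, a, hba, rfl⟩)

lemma lie_mul_mul_chain_mem_quadSpan (hc : IsCliffordFamily c) (hab : a ≠ b) (hbq : b ≠ q) :
    ⁅c a * c b, c b * c q⁆ ∈ quadSpan K c := by
  rw [hc.lie_mul_mul_chain hab hbq]
  rcases eq_or_ne a q with rfl | haq
  · rw [sub_self]; exact Submodule.zero_mem _
  · exact Submodule.sub_mem _ (hc.mul_mem_quadSpan haq) (hc.mul_mem_quadSpan haq.symm)

lemma lie_mul_mul_mem_quadSpan (hc : IsCliffordFamily c) (hab : a ≠ b) (hpq : p ≠ q) :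
    ⁅c a * c b, c p * c q⁆ ∈ quadSpan K c := by
  by_cases hbp : b = p
  · subst hbp; exact hc.lie_mul_mul_chain_mem_quadSpan hab hpq
  by_cases hbq : b = q
  · subst hbq
    rw [hc.anticomm hpq.symm, lie_neg]
    exact Submodule.neg_mem _ (hc.lie_mul_mul_chain_mem_quadSpan hab hpq.symm)
  rw [← neg_neg (c a * c b), ← hc.anticomm hab, neg_lie]
  refine Submodule.neg_mem _ ?_
  by_cases hap : a = p
  · subst hap; exact hc.lie_mul_mul_chain_mem_quadSpan hab.symm hpq
  by_cases haq : a = q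
  · subst haq
    rw [hc.anticomm hpq.symm, lie_neg]
    exact Submodule.neg_mem _ (hc.lie_mul_mul_chain_mem_quadSpan hab.symm hpq.symm)
  rw [(hc.commute_mul_mul hbp hbq hap haq).lie_eq]
  exact Submodule.zero_mem _

lemma lie_mem_quadSpan (hc : IsCliffordFamily c) {x y : R} (hx : x ∈ quadSpan K c)
    (hy : y ∈ quadSpan K c) : ⁅x, y⁆ ∈ quadSpan K c := by
  induction hx, hy using Submodule.span_induction₂ with
  | mem_mem x y hx hy =>
    obtain ⟨a, b, hab, rfl⟩ := hx
    obtain ⟨p, q, hpq, rfl⟩ := hy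
    exact hc.lie_mul_mul_mem_quadSpan hab.ne hpq.ne
  | zero_left y _ => simp
  | zero_right x _ => simp
  | add_left x y z _ _ _ hxz hyz => rw [add_lie]; exact Submodule.add_mem _ hxz hyz
  | add_right x y z _ _ _ hxy hxz => rw [lie_add]; exact Submodule.add_mem _ hxy hxz
  | smul_left r x y _ _ hxy => rw [smul_lie]; exact Submodule.smul_mem _ r hxy
  | smul_right r x y _ _ hxy => rw [lie_smul]; exact Submodule.smul_mem _ r hxy

variable (K) in
def quadLieSubalgebra (hc : IsCliffordFamily c) : LieSubalgebra K R :=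
  { quadSpan K c with lie_mem' := hc.lie_mem_quadSpan }

lemma quadSpan_le_of_succ_mem {K : Type*} [Field K] [CharZero K] [Algebra K R] {m : ℕ}
    {c : Fin m → R} (hc : IsCliffordFamily c) (L : LieSubalgebra K R)
    (hsucc : ∀ μ ν : Fin m, (ν : ℕ) = μ + 1 → c μ * c ν ∈ L) : quadSpan K c ≤ L.toSubmodule := by
  have key : ∀ d : ℕ, ∀ μ ν : Fin m, (ν : ℕ) = μ + d + 1 → c μ * c ν ∈ L := by
    intro d
    induction d with
    | zero => exact hsucc
    | succ d ih =>
      intro μ ν hν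
      let ρ : Fin m := ⟨μ + d + 1, by omega⟩
      have hμρ : μ ≠ ρ := Fin.ne_of_val_ne (by simp only [ρ]; omega)
      have hρν : ρ ≠ ν := Fin.ne_of_val_ne (by simp only [ρ]; omega)
      have hμν : μ ≠ ν := Fin.ne_of_val_ne (by omega)
      have h2 : (2 : K) • (c μ * c ν) ∈ L := by
        rw [two_smul, ← sub_neg_eq_add, ← hc.anticomm hμν, ← hc.lie_mul_mul_chain hμρ hρν]
        exact L.lie_mem (ih μ ρ rfl) (hsucc ρ ν (by simp only [ρ]; omega))
      exact (L.toSubmodule.smul_mem_iff two_ne_zero).mp h2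
  refine Submodule.span_le.mpr ?_
  rintro _ ⟨μ, ν, hμν, rfl⟩
  exact key (ν - μ - 1) μ ν (by have := Fin.lt_def.mp hμν; omega)

end IsCliffordFamily

end QuadraticSpan

section QuadraticMonomials

variable {ι R : Type*} [LinearOrder ι] [Ring R]

def quadMonomial (c : ι → R) (p : {p : ι × ι // p.1 < p.2}) : R := c p.1.1 * c p.1.2

lemma range_quadMonomial (c : ι → R) :
    Set.range (quadMonomial c) = {x | ∃ μ ν, μ < ν ∧ x = c μ * c ν} := by
  ext x
  constructor
  · rintro ⟨⟨⟨μ, ν⟩, h⟩, rfl⟩; exact ⟨μ, ν, h, rfl⟩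
  · rintro ⟨μ, ν, h, rfl⟩; exact ⟨⟨(μ, ν), h⟩, rfl⟩

lemma finrank_quadSpan [Fintype ι] {K : Type*} [Field K] [Algebra K R] {c : ι → R}
    (hc : LinearIndependent K (quadMonomial c)) :
    Module.finrank K (quadSpan K c) = (Fintype.card ι).choose 2 := by
  rw [quadSpan, ← range_quadMonomial, finrank_span_eq_card hc, Fintype.card_subtype,
    Fintype.card_product_filter_lt]

end QuadraticMonomials

section Trace

variable {m K : Type*} [Fintype m] [Field K] [CharZero K]

lemma Matrix.trace_mul_eq_zero_of_anticomm {A B : Matrix m m K} (h : B * A = -(A * B)) :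
    trace (A * B) = 0 := by
  have h2 : (2 : K) * trace (A * B) = 0 := by
    linear_combination (trace_mul_comm A B).trans (by rw [h, trace_neg])
  simpa using h2

variable [DecidableEq m] {ι : Type*} [LinearOrder ι] {c : ι → Matrix m m K}

lemma IsCliffordFamily.trace_quadMonomial_mul (hc : IsCliffordFamily c)
    (i j : {p : ι × ι // p.1 < p.2}) :
    trace (quadMonomial c i * quadMonomial c j) = if i = j then -(Fintype.card m : K) else 0 := by
  obtain ⟨⟨a, b⟩, hab⟩ := i
  obtain ⟨⟨p, q⟩, hpq⟩ := j
  simp only [quadMonomial]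
  split_ifs with hij
  · cases hij
    rw [hc.mul_mul_self hab.ne, trace_neg, trace_one]
  by_cases ha : a ≠ p ∧ a ≠ q
  · rw [mul_assoc, ← mul_assoc (c b)]
    exact trace_mul_eq_zero_of_anticomm (hc.mul_mul_mul_anticomm hab.ne ha.1 ha.2)
  by_cases hb : b ≠ p ∧ b ≠ q
  · rw [trace_mul_comm, ← mul_assoc, trace_mul_comm]
    exact trace_mul_eq_zero_of_anticomm (hc.mul_mul_mul_anticomm hb.1 hb.2 hab.ne')
  -- both `a` and `b` occur in `{p, q}`, which forces `(a, b) = (p, q)`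
  push Not at ha hb
  obtain rfl | hap := eq_or_ne a p
  · obtain rfl := hb hab.ne'
    exact absurd rfl hij
  · obtain rfl := ha hap
    obtain rfl | hbp := eq_or_ne b p
    · exact absurd (hpq.trans hab) (lt_irrefl _)
    · exact absurd (hb hbp) hab.ne'

lemma IsCliffordFamily.linearIndependent_quadMonomial [Nonempty m] (hc : IsCliffordFamily c) :
    LinearIndependent K (quadMonomial c) := by
  let B : LinearMap.BilinForm K (Matrix m m K) :=
    (LinearMap.mul K (Matrix m m K)).compr₂ (traceLinearMap m K K)
  refine LinearMap.linearIndependent_of_isOrthoᵢ (B := B)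
    (LinearMap.isOrthoᵢ_def.mpr fun i j hij => ?_) fun i => ?_
  · change trace (quadMonomial c i * quadMonomial c j) = 0
    rw [hc.trace_quadMonomial_mul, if_neg hij]
  · change trace (quadMonomial c i * quadMonomial c i) ≠ 0
    rw [hc.trace_quadMonomial_mul, if_pos rfl, neg_ne_zero, Nat.cast_ne_zero]
    exact Fintype.card_ne_zero

end Trace

section Tensor

variable {n : ℕ}

lemma tensor_mul (M N : Fin n → Matrix (Fin 2) (Fin 2) ℂ) :
    tensor M * tensor N = tensor fun j => M j * N j := by
  ext f g
  simp only [tensor, mul_apply, of_apply]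
  rw [Finset.prod_univ_sum, Fintype.piFinset_univ]
  exact Finset.sum_congr rfl fun x _ => Finset.prod_mul_distrib.symm

lemma tensor_one : tensor (fun _ : Fin n => (1 : Matrix (Fin 2) (Fin 2) ℂ)) = 1 := by
  ext f g
  simp only [tensor, of_apply, one_apply]
  split_ifs with hfg
  · simp [hfg]
  · obtain ⟨j, hj⟩ := Function.ne_iff.mp hfg
    exact Finset.prod_eq_zero (Finset.mem_univ j) (if_neg hj)

lemma tensor_eq_smul_tensor {M N : Fin n → Matrix (Fin 2) (Fin 2) ℂ} (j₀ : Fin n) (z : ℂ)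
    (h₀ : M j₀ = z • N j₀) (h : ∀ j ≠ j₀, M j = N j) : tensor M = z • tensor N := by
  ext f g
  simp only [tensor, of_apply, Matrix.smul_apply, smul_eq_mul]
  rw [← Finset.mul_prod_erase _ _ (Finset.mem_univ j₀),
    ← Finset.mul_prod_erase _ (fun j => N j (f j) (g j)) (Finset.mem_univ j₀), h₀,
    Matrix.smul_apply, smul_eq_mul, mul_assoc,
    Finset.prod_congr rfl fun j hj => by rw [h j (Finset.ne_of_mem_erase hj)]]

end Tensor

lemma σX_mul_σX : σX * σX = 1 := by
  ext i j; fin_cases i <;> fin_cases j <;> simp [σX, mul_apply, Fin.sum_univ_two, one_apply]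

lemma σY_mul_σY : σY * σY = 1 := by
  ext i j; fin_cases i <;> fin_cases j <;> simp [σY, mul_apply, Fin.sum_univ_two, one_apply]

lemma σZ_mul_σZ : σZ * σZ = 1 := by
  ext i j; fin_cases i <;> fin_cases j <;> simp [σZ, mul_apply, Fin.sum_univ_two, one_apply]

lemma σX_mul_σY : σX * σY = I • σZ := by
  ext i j; fin_cases i <;> fin_cases j <;> simp [σX, σY, σZ, mul_apply, Fin.sum_univ_two]

lemma σY_mul_σZ : σY * σZ = I • σX := by
  ext i j; fin_cases i <;> fin_cases j <;> simp [σX, σY, σZ, mul_apply, Fin.sum_univ_two]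

lemma σY_mul_σX : σY * σX = -(σX * σY) := by
  ext i j; fin_cases i <;> fin_cases j <;> simp [σX, σY, mul_apply, Fin.sum_univ_two]

lemma σZ_mul_σX : σZ * σX = -(σX * σZ) := by
  ext i j; fin_cases i <;> fin_cases j <;> simp [σX, σZ, mul_apply, Fin.sum_univ_two]

lemma σZ_mul_σY : σZ * σY = -(σY * σZ) := by
  ext i j; fin_cases i <;> fin_cases j <;> simp [σY, σZ, mul_apply, Fin.sum_univ_two]

section JordanWigner

variable {n : ℕ}

def majoranaFactor (μ : Fin (2 * n)) (j : Fin n) : Matrix (Fin 2) (Fin 2) ℂ :=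
  if (j : ℕ) < (μ : ℕ) / 2 then σZ
  else if (j : ℕ) = (μ : ℕ) / 2 then (if (μ : ℕ) % 2 = 0 then σX else σY)
  else 1

lemma majorana_eq_tensor (μ : Fin (2 * n)) : majorana n μ = tensor (majoranaFactor μ) := rfl

lemma majorana_mul_self (μ : Fin (2 * n)) : majorana n μ * majorana n μ = 1 := by
  rw [majorana_eq_tensor, tensor_mul, ← tensor_one]
  congr 1
  funext j
  unfold majoranaFactor
  split_ifs <;> simp only [σZ_mul_σZ, σX_mul_σX, σY_mul_σY, mul_one]

lemma majorana_anticomm_of_lt {μ ν : Fin (2 * n)} (h : μ < ν) :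
    majorana n ν * majorana n μ = -(majorana n μ * majorana n ν) := by
  have h' : (μ : ℕ) < ν := h
  have hν : (ν : ℕ) < 2 * n := ν.isLt
  rw [majorana_eq_tensor, majorana_eq_tensor, tensor_mul, tensor_mul, ← neg_one_smul ℂ]
  refine tensor_eq_smul_tensor (⟨μ / 2, by omega⟩ : Fin n) (-1) ?_ (fun j hj => ?_)
  · simp only [majoranaFactor, lt_irrefl, if_false, if_true]
    split_ifs <;> first | omega | simp [σY_mul_σX, σZ_mul_σX, σZ_mul_σY]
  · have hj : (j : ℕ) ≠ μ / 2 := fun h => hj (Fin.ext h)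
    simp only [majoranaFactor]
    split_ifs <;> first | omega | simp

lemma isCliffordFamily_majorana : IsCliffordFamily (majorana n) where
  mul_self := majorana_mul_self
  anticomm {μ ν} h := by
    rcases h.lt_or_gt with h | h
    · exact majorana_anticomm_of_lt h
    · rw [majorana_anticomm_of_lt h, neg_neg]

lemma smul_pauliZ_eq (j : Fin n) :
    I • pauliZ n j = majorana n ⟨2 * j, by omega⟩ * majorana n ⟨2 * j + 1, by omega⟩ := by
  have hμ : 2 * (j : ℕ) / 2 = j ∧ 2 * (j : ℕ) % 2 = 0 := by omega
  have hν : (2 * (j : ℕ) + 1) / 2 = j ∧ (2 * (j : ℕ) + 1) % 2 = 1 := by omega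
  rw [majorana_eq_tensor, majorana_eq_tensor, tensor_mul]
  refine (tensor_eq_smul_tensor j I ?_ (fun k hk => ?_)).symm
  · simp [majoranaFactor, hμ, hν, σX_mul_σY]
  · have hk : (k : ℕ) ≠ j := fun h => hk (Fin.ext h)
    simp only [majoranaFactor, hμ, hν]
    split_ifs <;> first | omega | simp [σZ_mul_σZ]

lemma smul_pauliXX_eq (j : Fin n) (hj : (j : ℕ) + 1 < n) :
    I • pauliXX n j = majorana n ⟨2 * j + 1, by omega⟩ * majorana n ⟨2 * j + 2, by omega⟩ := by
  have hμ : (2 * (j : ℕ) + 1) / 2 = j ∧ (2 * (j : ℕ) + 1) % 2 = 1 := by omega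
  have hν : (2 * (j : ℕ) + 2) / 2 = j + 1 ∧ (2 * (j : ℕ) + 2) % 2 = 0 := by omega
  rw [majorana_eq_tensor, majorana_eq_tensor, tensor_mul]
  refine (tensor_eq_smul_tensor j I ?_ (fun k hk => ?_)).symm
  · simp [majoranaFactor, hμ, hν, σY_mul_σZ]
  · have hk : (k : ℕ) ≠ j := fun h => hk (Fin.ext h)
    simp only [majoranaFactor, hμ, hν]
    split_ifs <;> first | omega | simp [σZ_mul_σZ]

lemma genSet_eq :
    genSet n = {x | ∃ μ ν : Fin (2 * n), (ν : ℕ) = μ + 1 ∧ x = majorana n μ * majorana n ν} := by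
  ext x
  constructor
  · rintro (⟨j, rfl⟩ | ⟨j, hj, rfl⟩)
    · exact ⟨_, _, rfl, smul_pauliZ_eq j⟩
    · exact ⟨_, _, rfl, smul_pauliXX_eq j hj⟩
  · rintro ⟨⟨μ, hμ⟩, ⟨ν, hν⟩, h, rfl⟩
    dsimp only at h
    subst h
    obtain ⟨j, rfl | rfl⟩ := Nat.even_or_odd' μ
    · have hj : j < n := by omega
      exact Or.inl ⟨⟨j, hj⟩, (smul_pauliZ_eq ⟨j, hj⟩).symm⟩
    · have hj : j + 1 < n := by omega
      exact Or.inr ⟨⟨j, by omega⟩, hj, (smul_pauliXX_eq ⟨j, by omega⟩ hj).symm⟩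

lemma lieSpan_genSet_toSubmodule :
    (LieSubalgebra.lieSpan ℝ (NMat n) (genSet n)).toSubmodule = quadSpan ℝ (majorana n) := by
  have hc : IsCliffordFamily (majorana n) := isCliffordFamily_majorana
  refine le_antisymm ?_ ?_
  · refine LieSubalgebra.lieSpan_le (K := hc.quadLieSubalgebra ℝ) |>.mpr ?_
    rw [genSet_eq]
    rintro _ ⟨μ, ν, h, rfl⟩
    exact hc.mul_mem_quadSpan (Fin.ne_of_val_ne (by omega))
  · refine hc.quadSpan_le_of_succ_mem _ fun μ ν h => LieSubalgebra.subset_lieSpan ?_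
    rw [genSet_eq]
    exact ⟨μ, ν, h, rfl⟩

end JordanWigner

theorem matchgate_dla_general (n : ℕ) :
    (LieSubalgebra.lieSpan ℝ (NMat n) (genSet n)).toSubmodule =
      Submodule.span ℝ
        {M | ∃ μ ν : Fin (2 * n), μ < ν ∧ M = majorana n μ * majorana n ν}
    ∧ Module.finrank ℝ (LieSubalgebra.lieSpan ℝ (NMat n) (genSet n)) = n * (2 * n - 1) := by
  refine ⟨lieSpan_genSet_toSubmodule, ?_⟩
  change Module.finrank ℝ (LieSubalgebra.lieSpan ℝ (NMat n) (genSet n)).toSubmodule = _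
  rw [lieSpan_genSet_toSubmodule,
    finrank_quadSpan (isCliffordFamily_majorana.linearIndependent_quadMonomial.restrict_scalars' ℝ),
    Fintype.card_fin, Nat.choose_two_right, mul_assoc, Nat.mul_div_cancel_left _ two_pos]

/-- The real Lie algebra generated by `{i Z_j} ∪ {i X_j X_{j+1}}` equals the real span of
the products of two distinct Majoranas, and has real dimension `n(2n−1)`. -/
theorem matchgate_dla (n : ℕ) (hn : 1 ≤ n) :
    (LieSubalgebra.lieSpan ℝ (NMat n) (genSet n)).toSubmodule =
      Submodule.span ℝ
        {M | ∃ μ ν : Fin (2 * n), μ < ν ∧ M = majorana n μ * majorana n ν}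
    ∧ Module.finrank ℝ (LieSubalgebra.lieSpan ℝ (NMat n) (genSet n)) = n * (2 * n - 1) :=
  matchgate_dla_general n

end
end

section
/- Let H, S, T, L be square complex matrices of the same size d, and suppose [H, L] = 0, [H, S] = 2i · T and [H, T] = −2i · S. Then the d² × d² matrix S ⊗ (L S) + T ⊗ (L T) commutes with H ⊗ I + I ⊗ H, where ⊗ denotes the Kronecker product and I the d × d identity: [H ⊗ I + I ⊗ H, S ⊗ (L S) + T ⊗ (L T)] = 0. -/
open scoped Kronecker

/-- If `[H, L] = 0`, `[H, S] = 2i T` and `[H, T] = −2i S`, then `S ⊗ (LS) + T ⊗ (LT)`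
commutes with `H ⊗ I + I ⊗ H`. -/
theorem quadratic_symmetry_pair {d : ℕ} (H S T L : Matrix (Fin d) (Fin d) ℂ)
    (hL : H * L - L * H = 0)
    (hS : H * S - S * H = (2 * Complex.I) • T)
    (hT : H * T - T * H = (-(2 * Complex.I)) • S) :
    (H ⊗ₖ (1 : Matrix (Fin d) (Fin d) ℂ) + (1 : Matrix (Fin d) (Fin d) ℂ) ⊗ₖ H) *
        (S ⊗ₖ (L * S) + T ⊗ₖ (L * T)) -
      (S ⊗ₖ (L * S) + T ⊗ₖ (L * T)) *
        (H ⊗ₖ (1 : Matrix (Fin d) (Fin d) ℂ) + (1 : Matrix (Fin d) (Fin d) ℂ) ⊗ₖ H) = 0 := by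
  have hHL : H * L = L * H := by linear_combination (norm := noncomm_ring) hL
  have hHS : H * S = S * H + (2 * Complex.I) • T := by
    rw [← hS]; noncomm_ring
  have hHT : H * T = T * H + (-(2 * Complex.I)) • S := by
    rw [← hT]; noncomm_ring
  simp only [mul_add, add_mul, ← Matrix.mul_kronecker_mul, Matrix.one_mul, Matrix.mul_one]
  rw [show H * (L * S) = L * (S * H) + (2 * Complex.I) • (L * T) by
    rw [← mul_assoc, hHL, mul_assoc, hHS]; noncomm_ring [mul_smul_comm]]
  rw [show H * (L * T) = L * (T * H) + (-(2 * Complex.I)) • (L * S) by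
    rw [← mul_assoc, hHL, mul_assoc, hHT]; noncomm_ring [mul_smul_comm]]
  rw [hHS, hHT]
  simp only [Matrix.add_kronecker, Matrix.kronecker_add, Matrix.smul_kronecker,
    Matrix.kronecker_smul]
  simp only [Matrix.smul_kronecker, Matrix.kronecker_smul, neg_smul, smul_neg, smul_smul, mul_assoc]
  abel
end

section
/- Let L be a 2^n × 2^n complex matrix that commutes with every generator H ∈ {Z_j : 1 ≤ j ≤ n} ∪ {X_j X_{j+1} : 1 ≤ j ≤ n−1}. Then L lies in the complex linear span of the identity I^{⊗n} and the parity operator P = Z^{⊗n}; in particular, this commutant has complex dimension 2. -/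
open Matrix Complex
open scoped Kronecker

noncomputable section

/-- The matchgate circuit generators `{Z_j} ∪ {X_j X_{j+1}}`. -/
def matchgateGens (n : ℕ) : Set (NMat n) :=
  {M | ∃ j : Fin n, M = pauliZ n j} ∪
  {M | ∃ j : Fin n, (j : ℕ) + 1 < n ∧ M = pauliXX n j}

/-- The space of linear symmetries: matrices commuting with every matchgate generator. -/
def linCommutant (n : ℕ) : Submodule ℂ (NMat n) where
  carrier := {L | ∀ H ∈ matchgateGens n, H * L = L * H}
  add_mem' := by
    intro a b ha hb H hH
    simp [Matrix.mul_add, Matrix.add_mul, ha H hH, hb H hH]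
  zero_mem' := by
    intro H hH
    simp
  smul_mem' := by
    intro c a ha H hH
    simp [Matrix.mul_smul, Matrix.smul_mul, ha H hH]

/-!
Commuting with the diagonal matrices `Z_j`, whose diagonals together separate the basis states,
forces `L` to be diagonal. Each `X_j X_{j+1}` is the permutation matrix of the translation by
`e_j + e_{j+1}` on `(ZMod 2)^n`, so commuting with it makes the diagonal of `L` invariant under
that translation, hence under the group these vectors generate: all vectors of even weight. The
diagonal of `L` therefore depends only on the parity `∑ k, f k`, which means that `L` is a
combination of `1` and `P = diagonal (fun f => (-1) ^ ∑ k, f k)`. Conversely `P` commutes with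
every generator, and `1`, `P` are linearly independent.
-/

namespace Matrix

variable {ι R : Type*} [Fintype ι] [DecidableEq ι]

theorem apply_eq_zero_of_commute_diagonal [CommRing R] [NoZeroDivisors R] {d : ι → R}
    {M : Matrix ι ι R} (h : Commute (diagonal d) M) {i j : ι} (hij : d i ≠ d j) :
    M i j = 0 := by
  have hij' := congrFun (congrFun h i) j
  rw [diagonal_mul, mul_diagonal] at hij'
  exact (mul_eq_zero.1 (by linear_combination hij' : (d i - d j) * M i j = 0)).resolve_left
    (sub_ne_zero.2 hij)

theorem commute_permMatrix_iff [NonAssocSemiring R] (σ : Equiv.Perm ι) (M : Matrix ι ι R) :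
    Commute (σ.permMatrix R) M ↔ ∀ i j, M (σ i) (σ j) = M i j := by
  rw [Commute, SemiconjBy, Equiv.Perm.permMatrix, PEquiv.toMatrix_toPEquiv_mul,
    PEquiv.mul_toMatrix_toPEquiv, ← Matrix.ext_iff]
  refine ⟨fun h i j => by simpa using h i (σ j), fun h i j => by simpa using h i (σ.symm j)⟩

end Matrix

open Function in
theorem periodic_of_sum_eq_zero {n : ℕ} {β : Type*} {d : (Fin n → Fin 2) → β}
    (hd : ∀ (j : Fin n) (hj : (j : ℕ) + 1 < n),
      Periodic d (Pi.single j 1 + Pi.single ⟨j + 1, hj⟩ 1))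
    {v : Fin n → Fin 2} (hv : ∑ i, v i = 0) : Periodic d v := by
  rcases n.eq_zero_or_pos with rfl | hn
  · simp [Subsingleton.elim v 0]
  set i₀ : Fin n := ⟨0, hn⟩
  have hanchor : ∀ i : Fin n, Periodic d (Pi.single i₀ 1 + Pi.single i 1) := by
    rintro ⟨i, hi⟩
    induction i with
    | zero => simp [i₀, ← Pi.single_add]
    | succ i ih =>
      have hsplit : Pi.single i₀ 1 + Pi.single ⟨i + 1, hi⟩ 1 =
          (Pi.single i₀ 1 + Pi.single ⟨i, by omega⟩ 1) +
            (Pi.single ⟨i, by omega⟩ 1 + Pi.single ⟨i + 1, hi⟩ 1 : Fin n → Fin 2) := by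
        rw [add_assoc, ← add_assoc (Pi.single ⟨i, by omega⟩ 1 : Fin n → Fin 2),
          ← Pi.single_add, show (1 + 1 : Fin 2) = 0 from rfl, Pi.single_zero, zero_add]
      rw [hsplit]
      exact (ih (by omega)).add_period (hd ⟨i, by omega⟩ hi)
  have hv_decomp : v = ∑ i, (Pi.single i₀ (v i) + Pi.single i (v i)) := by
    have hsingle := map_sum (AddMonoidHom.single (fun _ => Fin 2) i₀) v Finset.univ
    simp only [AddMonoidHom.single_apply, hv, Pi.single_zero] at hsingle
    rw [Finset.sum_add_distrib, ← hsingle, zero_add, Finset.univ_sum_single]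
  rw [hv_decomp]
  refine Finset.sum_induction _ (Periodic d) (fun _ _ => Periodic.add_period)
    (periodic_with_period_zero d) fun i _ => ?_
  generalize v i = a
  fin_cases a
  · simp
  · exact hanchor i

theorem AddChar.map_sum_eq_prod {ι A M : Type*} [AddCommMonoid A] [CommMonoid M]
    (ψ : AddChar A M) (s : Finset ι) (f : ι → A) :
    ψ (∑ i ∈ s, f i) = ∏ i ∈ s, ψ (f i) := by
  classical
  induction s using Finset.induction_on with
  | empty => simp
  | insert i s hi ih => rw [Finset.sum_insert hi, Finset.prod_insert hi, map_add_eq_mul, ih]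

theorem tensor_diagonal {n : ℕ} (d : Fin n → Fin 2 → ℂ) :
    tensor (fun k => diagonal (d k)) = diagonal fun f => ∏ k, d k (f k) := by
  ext f g
  simp only [tensor, of_apply, diagonal_apply, Finset.prod_ite_zero, Finset.mem_univ,
    true_implies, funext_iff]

theorem tensor_permMatrix {n : ℕ} (τ : Fin n → Equiv.Perm (Fin 2)) :
    tensor (fun k => (τ k).permMatrix ℂ) =
      Equiv.Perm.permMatrix ℂ (Equiv.piCongrRight τ) := by
  ext f g
  simp [tensor, PEquiv.toMatrix_apply, Equiv.toPEquiv_apply, Finset.prod_boole, funext_iff]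

def zSign : AddChar (Fin 2) ℂ where
  toFun := ![1, -1]
  map_zero_eq_one' := rfl
  map_add_eq_mul' a b := by fin_cases a <;> fin_cases b <;> simp

@[simp]
theorem zSign_one : zSign 1 = -1 := rfl

theorem zSign_injective : Function.Injective zSign := by
  intro a b
  fin_cases a <;> fin_cases b <;> norm_num

theorem σZ_eq_diagonal : σZ = diagonal zSign := by
  ext a b
  fin_cases a <;> fin_cases b <;> rfl

theorem σX_eq_permMatrix : σX = (Equiv.addRight 1 : Equiv.Perm (Fin 2)).permMatrix ℂ := by
  ext a b
  fin_cases a <;> fin_cases b <;> simp [σX, PEquiv.toMatrix_apply, Equiv.toPEquiv_apply]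

section

variable {n : ℕ}

theorem pauliZ_eq_diagonal (j : Fin n) : pauliZ n j = diagonal fun f => zSign (f j) := by
  have hfactors : (fun k => if k = j then σZ else 1) =
      fun k => diagonal (if k = j then ⇑zSign else 1) := by
    funext k
    split_ifs
    · exact σZ_eq_diagonal
    · exact diagonal_one.symm
  rw [pauliZ, hfactors, tensor_diagonal]
  simp only [ite_apply, Pi.one_apply, Finset.prod_ite_eq', Finset.mem_univ, if_true]

theorem parity_eq_diagonal : parity n = diagonal fun f => zSign (∑ k, f k) := by
  simp_rw [parity, σZ_eq_diagonal, tensor_diagonal, AddChar.map_sum_eq_prod]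

theorem pauliXX_eq_permMatrix (j : Fin n) (hj : (j : ℕ) + 1 < n) :
    pauliXX n j = Equiv.Perm.permMatrix ℂ
      (Equiv.addRight (Pi.single j 1 + Pi.single ⟨j + 1, hj⟩ 1 : Fin n → Fin 2)) := by
  have hfactors : (fun k : Fin n => if (k : ℕ) = j ∨ (k : ℕ) = j + 1 then σX else 1) =
      fun k => Equiv.Perm.permMatrix ℂ
        (Equiv.addRight ((Pi.single j 1 + Pi.single ⟨j + 1, hj⟩ 1 : Fin n → Fin 2) k)) := by
    funext k
    by_cases hkj : k = j
    · subst hkj; simp [σX_eq_permMatrix, Fin.ext_iff]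
    by_cases hkj' : (k : ℕ) = j + 1
    · obtain rfl : k = ⟨j + 1, hj⟩ := Fin.ext hkj'
      simp [σX_eq_permMatrix, Fin.ext_iff]
    · have hkj'' : (k : ℕ) ≠ j := fun h => hkj (Fin.ext h)
      simp [Fin.ext_iff, hkj', hkj'']
  rw [pauliXX, hfactors, tensor_permMatrix]
  rfl

theorem isDiag_of_forall_commute_pauliZ {L : NMat n} (h : ∀ j, Commute (pauliZ n j) L) :
    L.IsDiag := by
  intro f g hfg
  obtain ⟨j, hj⟩ := Function.ne_iff.1 hfg
  have hcomm := h j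
  rw [pauliZ_eq_diagonal] at hcomm
  exact apply_eq_zero_of_commute_diagonal hcomm (zSign_injective.ne hj)

theorem periodic_diag_of_forall_commute_pauliXX {L : NMat n}
    (h : ∀ j : Fin n, (j : ℕ) + 1 < n → Commute (pauliXX n j) L)
    {v : QIdx n} (hv : ∑ k, v k = 0) : Function.Periodic L.diag v := by
  refine periodic_of_sum_eq_zero (fun j hj f => ?_) hv
  have hcomm := h j hj
  rw [pauliXX_eq_permMatrix j hj, commute_permMatrix_iff] at hcomm
  exact hcomm f f

theorem diagonal_mem_span_one_parity (hn : 1 ≤ n) {d : QIdx n → ℂ}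
    (hd : ∀ v : QIdx n, ∑ k, v k = 0 → Function.Periodic d v) :
    diagonal d ∈ Submodule.span ℂ {1, parity n} := by
  set i₀ : Fin n := ⟨0, hn⟩
  have hd_sum : ∀ f, d f = d (Pi.single i₀ (∑ k, f k)) := fun f => by
    have h := hd (f - Pi.single i₀ (∑ k, f k)) (by simp [Finset.sum_sub_distrib])
      (Pi.single i₀ (∑ k, f k))
    rwa [add_sub_cancel] at h
  set a := d (Pi.single i₀ 0)
  set b := d (Pi.single i₀ 1)
  have hvalue : ∀ s, d (Pi.single i₀ s) = (a + b) / 2 + (a - b) / 2 * zSign s := by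
    intro s
    fin_cases s <;>
      simp only [Fin.zero_eta, Fin.mk_one, AddChar.map_zero_eq_one, zSign_one, a, b] <;> ring
  rw [Submodule.mem_span_pair]
  refine ⟨(a + b) / 2, (a - b) / 2, ?_⟩
  rw [parity_eq_diagonal, ← diagonal_one, ← diagonal_smul, ← diagonal_smul, diagonal_add]
  congr 1
  funext f
  rw [hd_sum f, hvalue]
  simp

theorem mem_span_one_parity_of_forall_commute (hn : 1 ≤ n) {L : NMat n}
    (h : ∀ H ∈ matchgateGens n, Commute H L) : L ∈ Submodule.span ℂ {1, parity n} := by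
  have hdiag := isDiag_of_forall_commute_pauliZ fun j => h _ (Or.inl ⟨j, rfl⟩)
  rw [← hdiag.diagonal_diag]
  exact diagonal_mem_span_one_parity hn fun v hv =>
    periodic_diag_of_forall_commute_pauliXX (fun j hj => h _ (Or.inr ⟨j, hj, rfl⟩)) hv

theorem parity_mem_linCommutant : parity n ∈ linCommutant n := by
  rintro H (⟨j, rfl⟩ | ⟨j, hj, rfl⟩)
  · rw [pauliZ_eq_diagonal, parity_eq_diagonal]
    exact commute_diagonal _ _
  · rw [pauliXX_eq_permMatrix j hj]
    refine (commute_permMatrix_iff _ _).2 fun f g => ?_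
    simp [parity_eq_diagonal, diagonal_apply, Finset.sum_add_distrib, add_assoc]

theorem linCommutant_eq_span (hn : 1 ≤ n) :
    linCommutant n = Submodule.span ℂ {1, parity n} := by
  refine le_antisymm (fun L hL => mem_span_one_parity_of_forall_commute hn hL) ?_
  rw [Submodule.span_le, Set.insert_subset_iff, Set.singleton_subset_iff]
  exact ⟨fun H _ => Commute.one_right H, parity_mem_linCommutant⟩

theorem linearIndependent_one_parity (hn : 1 ≤ n) :
    LinearIndependent ℂ ![(1 : NMat n), parity n] := by
  rw [LinearIndependent.pair_iff]
  intro s t hst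
  have h0 := congrFun (congrFun hst 0) 0
  have h1 := congrFun (congrFun hst (Pi.single ⟨0, hn⟩ 1)) (Pi.single ⟨0, hn⟩ 1)
  simp only [parity_eq_diagonal, Matrix.add_apply, Matrix.smul_apply, one_apply_eq,
    diagonal_apply_eq, Matrix.zero_apply, Pi.zero_apply, smul_eq_mul, mul_one,
    Finset.sum_const_zero, Finset.sum_pi_single', Finset.mem_univ, ↓reduceIte,
    AddChar.map_zero_eq_one, zSign_one] at h0 h1
  exact ⟨by linear_combination (h0 + h1) / 2, by linear_combination (h0 - h1) / 2⟩

end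

/-- Any matrix commuting with all matchgate generators is a combination of the identity and
the parity operator `P = Z^{⊗n}`; the commutant has dimension `2`. -/
theorem linear_symmetries (n : ℕ) (hn : 1 ≤ n) :
    (∀ L : NMat n, (∀ H ∈ matchgateGens n, H * L = L * H) →
      L ∈ Submodule.span ℂ {(1 : NMat n), parity n})
    ∧ Module.finrank ℂ (linCommutant n) = 2 := by
  refine ⟨fun L hL => mem_span_one_parity_of_forall_commute hn hL, ?_⟩
  rw [linCommutant_eq_span hn, ← Matrix.range_cons_cons_empty (1 : NMat n) (parity n) ![],
    finrank_span_eq_card (linearIndependent_one_parity hn), Fintype.card_fin]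

end
end
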